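/- The nilpotent element $f = \sum f_{a,b}$ (sum over $a,b \in I_{nl}$ with $\mathrm{row}(a)=\mathrm{row}(b)$, $\mathrm{col}(b)+2 = \mathrm{col}(a) \geq 2$, together with terms where $\mathrm{row}(a)=\mathrm{row}(b) > 0$ and $\mathrm{col}(b)+2=\mathrm{col}(a)=1$) satisfies $f \in \mathfrak{g}_{-2}$, and $f$ is nilpotent as a matrix with $f^l = 0$ and $f^{l-1} \neq 0$. -/

import Mathlib

open Matrix

/-- Matrix unit `e_{a,b}` of `gl(nl)` (indices identified with `I_{nl}` via `k ↦ 2k+1-nl`). -/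
noncomputable def matE (N : ℕ) (i j : Fin N) : Matrix (Fin N) (Fin N) ℂ :=
  Matrix.single i j 1

/-- `f_{a,b} = e_{a,b} - e_{-b,-a}` (negation of an index is `Fin.rev`). -/
noncomputable def matF (N : ℕ) (i j : Fin N) : Matrix (Fin N) (Fin N) ℂ :=
  matE N i j - matE N j.rev i.rev

/-- `col(a) ∈ I_l` for `a ∈ I_{nl}`, from the decomposition `a = col(a)·n + row(a)`. -/
def colZ (n l : ℕ) (k : Fin (n * l)) : ℤ := 2 * (((k : ℕ) / n : ℕ) : ℤ) + 1 - (l : ℤ)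

/-- `row(a) ∈ I_n` for `a ∈ I_{nl}`, from the decomposition `a = col(a)·n + row(a)`. -/
def rowZ (n l : ℕ) (k : Fin (n * l)) : ℤ := 2 * (((k : ℕ) % n : ℕ) : ℤ) + 1 - (n : ℤ)

/-- The nilpotent element `f = Σ f_{a,b}`, summed over pairs with `row(a) = row(b)`,
`col(b) + 2 = col(a) ≥ 2`, together with pairs with `row(a) = row(b) > 0`,
`col(b) + 2 = col(a) = 1`. -/
noncomputable def nilF (n l : ℕ) : Matrix (Fin (n * l)) (Fin (n * l)) ℂ :=
  ∑ a : Fin (n * l), ∑ b : Fin (n * l),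
    if (rowZ n l a = rowZ n l b ∧ colZ n l b + 2 = colZ n l a ∧ 2 ≤ colZ n l a)
        ∨ (rowZ n l a = rowZ n l b ∧ 0 < rowZ n l a ∧ colZ n l b + 2 = colZ n l a
            ∧ colZ n l a = 1)
    then matF (n * l) a b else 0

def P (n l : ℕ) (a b : Fin (n*l)) : Prop :=
  (rowZ n l a = rowZ n l b ∧ colZ n l b + 2 = colZ n l a ∧ 2 ≤ colZ n l a)
  ∨ (rowZ n l a = rowZ n l b ∧ 0 < rowZ n l a ∧ colZ n l b + 2 = colZ n l a ∧ colZ n l a = 1)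

instance (n l : ℕ) (a b : Fin (n*l)) : Decidable (P n l a b) := by unfold P; infer_instance

lemma nilF_apply (n l : ℕ) (a b : Fin (n*l)) :
    nilF n l a b = (if P n l a b then (1:ℂ) else 0) - (if P n l b.rev a.rev then 1 else 0) := by
  classical
  have h : nilF n l = ∑ a' : Fin (n*l), ∑ b' : Fin (n*l),
      if P n l a' b' then matF (n*l) a' b' else 0 := by
    unfold nilF P
    congr 1
  rw [h]
  simp only [Matrix.sum_apply, apply_ite (fun M : Matrix (Fin (n*l)) (Fin (n*l)) ℂ => M a b),
    Matrix.zero_apply, matF, matE, Matrix.sub_apply, Matrix.single, Matrix.of_apply]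
  have split : ∀ (c : Prop) [Decidable c] (x y : ℂ),
      (if c then x - y else 0) = (if c then x else 0) - (if c then y else 0) := by
    intros c _ x y; split <;> simp
  simp only [split]
  simp only [Finset.sum_sub_distrib]
  congr 1
  · rw [Finset.sum_eq_single a]
    · rw [Finset.sum_eq_single b]
      · simp
      · intro b' _ hb'; simp [hb']
      · simp
    · intro a' _ ha'
      rw [Finset.sum_eq_zero]
      intro b' _; simp [ha']
    · simp
  · simp only [Fin.rev_eq_iff]
    rw [Finset.sum_eq_single b.rev]
    · rw [Finset.sum_eq_single a.rev]
      · simp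
      · intro b' _ hb'; simp [hb']
      · simp
    · intro a' _ ha'
      rw [Finset.sum_eq_zero]
      intro b' _; simp [ha']
    · simp

lemma div_lt (n l : ℕ) (hn0 : 0 < n) (a : Fin (n*l)) : (a:ℕ)/n < l := by
  rw [Nat.div_lt_iff_lt_mul hn0]
  exact lt_of_lt_of_eq a.isLt (mul_comm n l)

lemma rev_divmod (n l : ℕ) (hn0 : 0 < n) (a : Fin (n*l)) :
    ((a.rev : Fin (n*l)) : ℕ)/n = l - 1 - (a:ℕ)/n ∧
    ((a.rev : Fin (n*l)) : ℕ)%n = n - 1 - (a:ℕ)%n := by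
  have hlt : (a:ℕ) < n*l := a.isLt
  obtain ⟨q, r, hr, hqr⟩ : ∃ q r, r < n ∧ (a:ℕ) = n*q + r :=
    ⟨(a:ℕ)/n, (a:ℕ)%n, Nat.mod_lt _ hn0, (Nat.div_add_mod _ n).symm⟩
  have hql : q < l := by
    by_contra hq
    push_neg at hq
    have : n*l ≤ n*q := Nat.mul_le_mul_left n hq
    omega
  have hdiv : (a:ℕ)/n = q := by
    rw [hqr, Nat.mul_add_div hn0, Nat.div_eq_of_lt hr, add_zero]
  have hmod : (a:ℕ)%n = r := by
    rw [hqr, Nat.mul_add_mod, Nat.mod_eq_of_lt hr]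
  have hrev : ((a.rev : Fin (n*l)) : ℕ) = n*l - 1 - (a:ℕ) := by
    rw [Fin.val_rev]; omega
  have key : n*l = n*(l-1-q) + n*q + n := by
    have h2 : l = (l-1-q) + q + 1 := by omega
    calc n*l = n*((l-1-q) + q + 1) := by rw [← h2]
      _ = n*(l-1-q) + n*q + n := by ring
  have hval : ((a.rev : Fin (n*l)) : ℕ) = n*(l-1-q) + (n-1-r) := by
    rw [hrev, hqr]; omega
  refine ⟨?_, ?_⟩
  · rw [hval, Nat.mul_add_div hn0, Nat.div_eq_of_lt (by omega), add_zero, hdiv]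
  · rw [hval, Nat.mul_add_mod, Nat.mod_eq_of_lt (by omega), hmod]

lemma P_iff (n l : ℕ) (a b : Fin (n*l)) :
    P n l a b ↔ ((a:ℕ)%n = (b:ℕ)%n ∧ (a:ℕ)/n = (b:ℕ)/n + 1 ∧
      (l+1 ≤ 2*((a:ℕ)/n) ∨ (2*((a:ℕ)/n) = l ∧ n+1 ≤ 2*((a:ℕ)%n)+1))) := by
  unfold P rowZ colZ
  obtain ⟨qa, hqa⟩ : ∃ q, (a:ℕ)/n = q := ⟨_, rfl⟩
  obtain ⟨qb, hqb⟩ : ∃ q, (b:ℕ)/n = q := ⟨_, rfl⟩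
  obtain ⟨ra, hra⟩ : ∃ r, (a:ℕ)%n = r := ⟨_, rfl⟩
  obtain ⟨rb, hrb⟩ : ∃ r, (b:ℕ)%n = r := ⟨_, rfl⟩
  rw [hqa, hqb, hra, hrb]
  omega

lemma nilF_support (n l : ℕ) (hn0 : 0 < n) (hl0 : 0 < l) (a b : Fin (n*l))
    (h : nilF n l a b ≠ 0) : (a:ℕ)/n = (b:ℕ)/n + 1 ∧ (a:ℕ)%n = (b:ℕ)%n := by
  rw [nilF_apply] at h
  have hqa := div_lt n l hn0 a
  have hqb := div_lt n l hn0 b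
  have hra : (a:ℕ)%n < n := Nat.mod_lt _ hn0
  have hrb : (b:ℕ)%n < n := Nat.mod_lt _ hn0
  by_cases h1 : P n l a b
  · rw [P_iff] at h1; exact ⟨h1.2.1, h1.1⟩
  · by_cases h2 : P n l b.rev a.rev
    · rw [P_iff] at h2
      obtain ⟨hda, hma⟩ := rev_divmod n l hn0 a
      obtain ⟨hdb, hmb⟩ := rev_divmod n l hn0 b
      rw [hda, hmb, hdb, hma] at h2
      obtain ⟨qa, hqa'⟩ : ∃ q, (a:ℕ)/n = q := ⟨_, rfl⟩
      obtain ⟨qb, hqb'⟩ : ∃ q, (b:ℕ)/n = q := ⟨_, rfl⟩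
      obtain ⟨ra, hra'⟩ : ∃ r, (a:ℕ)%n = r := ⟨_, rfl⟩
      obtain ⟨rb, hrb'⟩ : ∃ r, (b:ℕ)%n = r := ⟨_, rfl⟩
      rw [hqa', hqb', hra', hrb'] at h2 ⊢
      rw [hqa'] at hqa
      rw [hqb'] at hqb
      rw [hra'] at hra
      rw [hrb'] at hrb
      omega
    · simp [h1, h2] at h

/-- The distinguished index `j·n` (clamped). -/
def idx (n l : ℕ) (hn0 : 0 < n) (hl0 : 0 < l) (j : ℕ) : Fin (n*l) :=
  ⟨(min j (l-1))*n, by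
    have : min j (l-1) < l := by omega
    calc (min j (l-1))*n < l*n := by
          exact (Nat.mul_lt_mul_right hn0).mpr this
      _ = n*l := mul_comm _ _⟩

lemma idx_val (n l : ℕ) (hn0 : 0 < n) (hl0 : 0 < l) (j : ℕ) (hj : j < l) :
    ((idx n l hn0 hl0 j : Fin (n*l)) : ℕ) = j*n := by
  simp only [idx]
  congr 1
  omega

lemma nilF_step (n l : ℕ) (hn : Even n) (hl : Even l) (hn0 : 0 < n) (hl0 : 0 < l)
    (j : ℕ) (hj : j + 1 < l) :
    nilF n l (idx n l hn0 hl0 (j+1)) (idx n l hn0 hl0 j) ≠ 0 := by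
  obtain ⟨c, rfl⟩ := hn
  obtain ⟨m, rfl⟩ := hl
  set a := idx (c+c) (m+m) hn0 hl0 (j+1)
  set b := idx (c+c) (m+m) hn0 hl0 j
  have hav : (a:ℕ) = (j+1)*(c+c) := idx_val _ _ hn0 hl0 (j+1) hj
  have hbv : (b:ℕ) = j*(c+c) := idx_val _ _ hn0 hl0 j (by omega)
  have hc0 : 0 < c := by omega
  have hda : (a:ℕ)/(c+c) = j+1 := by rw [hav, Nat.mul_div_cancel _ hn0]
  have hdb : (b:ℕ)/(c+c) = j := by rw [hbv, Nat.mul_div_cancel _ hn0]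
  have hma : (a:ℕ)%(c+c) = 0 := by rw [hav, Nat.mul_mod_left]
  have hmb : (b:ℕ)%(c+c) = 0 := by rw [hbv, Nat.mul_mod_left]
  obtain ⟨hdra, hmra⟩ := rev_divmod (c+c) (m+m) hn0 a
  obtain ⟨hdrb, hmrb⟩ := rev_divmod (c+c) (m+m) hn0 b
  rw [nilF_apply]
  by_cases h1 : P (c+c) (m+m) a b
  · have h2 : ¬ P (c+c) (m+m) b.rev a.rev := by
      rw [P_iff] at h1 ⊢
      rw [hdrb, hdra, hmrb, hmra, hda, hdb, hma, hmb] at *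
      omega
    simp [h1, h2]
  · have h2 : P (c+c) (m+m) b.rev a.rev := by
      rw [P_iff] at h1 ⊢
      rw [hdrb, hdra, hmrb, hmra, hda, hdb, hma, hmb] at *
      omega
    simp [h1, h2]

lemma pow_support (n l : ℕ) (hn0 : 0 < n) (hl0 : 0 < l) :
    ∀ (k : ℕ) (a b : Fin (n*l)), (nilF n l ^ k) a b ≠ 0 → (a:ℕ)/n = (b:ℕ)/n + k := by
  intro k
  induction k with
  | zero =>
    intro a b h
    rw [pow_zero, Matrix.one_apply] at h
    by_cases hab : a = b
    · subst hab; rw [Nat.add_zero]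
    · simp [hab] at h
  | succ k ih =>
    intro a b h
    rw [pow_succ, Matrix.mul_apply] at h
    obtain ⟨c, _, hc⟩ := Finset.exists_ne_zero_of_sum_ne_zero h
    have h1 : (nilF n l ^ k) a c ≠ 0 := fun h' => hc (by simp [h'])
    have h2 : nilF n l c b ≠ 0 := fun h' => hc (by simp [h'])
    have e1 := ih a c h1
    have e2 := (nilF_support n l hn0 hl0 c b h2).1
    obtain ⟨qa, hqa⟩ : ∃ q, (a:ℕ)/n = q := ⟨_, rfl⟩
    obtain ⟨qb, hqb⟩ : ∃ q, (b:ℕ)/n = q := ⟨_, rfl⟩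
    obtain ⟨qc, hqc⟩ : ∃ q, (c:ℕ)/n = q := ⟨_, rfl⟩
    rw [hqa, hqc] at e1
    rw [hqc, hqb] at e2
    rw [hqa, hqb]
    omega

lemma pow_l_eq_zero (n l : ℕ) (hn0 : 0 < n) (hl0 : 0 < l) : nilF n l ^ l = 0 := by
  ext a b
  simp only [Matrix.zero_apply]
  by_contra h
  have e1 := pow_support n l hn0 hl0 l a b h
  have e2 := div_lt n l hn0 a
  obtain ⟨qa, hqa⟩ : ∃ q, (a:ℕ)/n = q := ⟨_, rfl⟩
  obtain ⟨qb, hqb⟩ : ∃ q, (b:ℕ)/n = q := ⟨_, rfl⟩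
  rw [hqa, hqb] at e1
  rw [hqa] at e2
  omega

lemma pow_entry_ne_zero (n l : ℕ) (hn : Even n) (hl : Even l) (hn0 : 0 < n) (hl0 : 0 < l) :
    ∀ (k : ℕ), k < l → (nilF n l ^ k) (idx n l hn0 hl0 k) (idx n l hn0 hl0 0) ≠ 0 := by
  intro k
  induction k with
  | zero =>
    intro _
    rw [pow_zero, Matrix.one_apply_eq]
    exact one_ne_zero
  | succ k ih =>
    intro hk
    have ihk := ih (by omega)
    rw [pow_succ', Matrix.mul_apply]
    rw [Finset.sum_eq_single (idx n l hn0 hl0 k)]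
    · exact mul_ne_zero (nilF_step n l hn hl hn0 hl0 k hk) ihk
    · intro c _ hc
      by_cases h1 : nilF n l (idx n l hn0 hl0 (k+1)) c = 0
      · rw [h1, zero_mul]
      · exfalso
        apply hc
        obtain ⟨hd, hm⟩ := nilF_support n l hn0 hl0 _ c h1
        have hav : ((idx n l hn0 hl0 (k+1) : Fin (n*l)) : ℕ) = (k+1)*n :=
          idx_val n l hn0 hl0 (k+1) hk
        have hkv : ((idx n l hn0 hl0 k : Fin (n*l)) : ℕ) = k*n :=
          idx_val n l hn0 hl0 k (by omega)
        rw [hav, Nat.mul_div_cancel _ hn0] at hd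
        rw [hav, Nat.mul_mod_left] at hm
        obtain ⟨qc, hqc⟩ : ∃ q, (c:ℕ)/n = q := ⟨_, rfl⟩
        obtain ⟨rc, hrc⟩ : ∃ r, (c:ℕ)%n = r := ⟨_, rfl⟩
        rw [hqc] at hd
        rw [hrc] at hm
        have hcd : (c:ℕ)/n = k := by rw [hqc]; omega
        have hcm : (c:ℕ)%n = 0 := by rw [hrc]; omega
        have hdm := Nat.div_add_mod (c:ℕ) n
        rw [hcd, hcm, Nat.add_zero, Nat.mul_comm] at hdm
        exact Fin.ext (by rw [← hdm, hkv])
    · simp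

/-- `f ∈ 𝔤_{-2}`, and `f` is nilpotent with `f^l = 0` and `f^{l-1} ≠ 0`. -/
theorem stmt17 (n l : ℕ) (hn : Even n) (hl : Even l) (hn0 : 0 < n) (hl0 : 0 < l) :
    nilF n l ∈ Submodule.span ℂ {m : Matrix (Fin (n * l)) (Fin (n * l)) ℂ |
        ∃ a b, colZ n l b - colZ n l a = -2 ∧ m = matF (n * l) a b}
      ∧ nilF n l ^ l = 0 ∧ nilF n l ^ (l - 1) ≠ 0 := by
  refine ⟨?_, pow_l_eq_zero n l hn0 hl0, ?_⟩
  · unfold nilF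
    apply Submodule.sum_mem
    intro a _
    apply Submodule.sum_mem
    intro b _
    split
    · next h =>
      apply Submodule.subset_span
      refine ⟨a, b, ?_, rfl⟩
      rcases h with ⟨_, h2, _⟩ | ⟨_, _, h2, _⟩ <;> linarith
    · exact Submodule.zero_mem _
  · intro h
    have := pow_entry_ne_zero n l hn hl hn0 hl0 (l-1) (by omega)
    rw [h] at this
    simp at this
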